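/- Discrete ℓ² summation estimate over dyadic cubes (large part): Let 1 < p < 2 and let F : ℝ² → [0,∞) be in L²(ℝ²) with ‖F‖_{L²} ≤ 1. For j ∈ ℤ let 𝒟_j be the dyadic cubes of side-length 2^j. Then Σ_{j∈ℤ} Σ_{Q∈𝒟_j} ( |Q|^{−(2−p)/p} ‖F·χ_{{F ≥ 2^{−j}}}‖_{L^p(Q)}² )^{3/2} ≲ 1, where the implicit constant depends only on p. -/

import Mathlib

open MeasureTheory

noncomputable section

abbrev E2 := EuclideanSpace ℝ (Fin 2)

/-- The dyadic cube of side-length `2^j` in `ℝ²` indexed by `k ∈ ℤ²`: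
`[2^j k₁, 2^j(k₁+1)) × [2^j k₂, 2^j(k₂+1))`. -/
def dyadicCube (j : ℤ) (k : Fin 2 → ℤ) : Set E2 :=
  {ξ | ∀ i, (2 : ℝ) ^ j * k i ≤ ξ i ∧ ξ i < (2 : ℝ) ^ j * (k i + 1)}

/-!
On a cube `Q ∈ 𝒟_j`, Hölder and `‖F‖₂ ≤ 1` give `y_Q := |Q|^{-(2-p)/2} ∫_Q G_j^p ≤ 1`, where
`G_j = F·χ_{F ≥ 2^{-j}}`, and the summand is `y_Q^{3/p} ≤ y_Q`. Summing `y_Q` over `Q ∈ 𝒟_j`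
and then over `j` leaves `∫ Σ_{j : 2^{-j} ≤ F} 2^{-j(2-p)} F^p`, and the geometric series is
at most `(1 - 2^{-(2-p)})⁻¹ F^{2-p}` pointwise.
-/

open scoped ENNReal

lemma dyadicCube_eq_preimage (j : ℤ) (k : Fin 2 → ℤ) :
    dyadicCube j k = (MeasurableEquiv.toLp 2 (Fin 2 → ℝ)).symm ⁻¹'
      Set.univ.pi fun i => Set.Ico ((2 : ℝ) ^ j * k i) ((2 : ℝ) ^ j * (k i + 1)) := by
  ext ξ
  simp only [dyadicCube, Set.mem_ofPred_eq, Set.mem_preimage, Set.mem_univ_pi, Set.mem_Ico]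
  rfl

lemma measurableSet_dyadicCube (j : ℤ) (k : Fin 2 → ℤ) : MeasurableSet (dyadicCube j k) :=
  dyadicCube_eq_preimage j k ▸ (MeasurableEquiv.toLp 2 (Fin 2 → ℝ)).symm.measurable
    (MeasurableSet.univ_pi fun _ => measurableSet_Ico)

lemma mem_dyadicCube_iff (j : ℤ) (k : Fin 2 → ℤ) (ξ : E2) :
    ξ ∈ dyadicCube j k ↔ ∀ i, ⌊ξ i / (2 : ℝ) ^ j⌋ = k i := by
  have h := zpow_pos (two_pos (α := ℝ)) j
  simp only [dyadicCube, Set.mem_ofPred_eq, Int.floor_eq_iff, le_div_iff₀ h, div_lt_iff₀ h,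
    mul_comm ((2 : ℝ) ^ j)]

lemma pairwise_disjoint_dyadicCube (j : ℤ) : Pairwise (Function.onFun Disjoint (dyadicCube j)) :=
  fun k k' hkk' => Set.disjoint_left.2 fun ξ hk hk' => hkk' <| funext fun i => by
    rw [← (mem_dyadicCube_iff j k ξ).1 hk i, ← (mem_dyadicCube_iff j k' ξ).1 hk' i]

lemma iUnion_dyadicCube (j : ℤ) : ⋃ k, dyadicCube j k = Set.univ :=
  Set.eq_univ_of_forall fun ξ =>
    Set.mem_iUnion.2 ⟨fun i => ⌊ξ i / (2 : ℝ) ^ j⌋, (mem_dyadicCube_iff j _ ξ).2 fun _ => rfl⟩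

lemma volume_dyadicCube (j : ℤ) (k : Fin 2 → ℤ) :
    volume (dyadicCube j k) = ENNReal.ofReal ((4 : ℝ) ^ j) := by
  rw [dyadicCube_eq_preimage,
    (EuclideanSpace.volume_preserving_symm_measurableEquiv_toLp (Fin 2)).measure_preimage
      (MeasurableSet.univ_pi fun _ => measurableSet_Ico).nullMeasurableSet,
    volume_pi_pi]
  simp only [Real.volume_Ico, mul_add_one, add_sub_cancel_left, Fin.prod_const]
  rw [← ENNReal.ofReal_pow (by positivity), ← zpow_natCast, ← zpow_mul, mul_comm, zpow_mul]
  norm_num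

lemma tsum_setLIntegral_dyadicCube (j : ℤ) (f : E2 → ℝ≥0∞) :
    ∑' k, ∫⁻ ξ in dyadicCube j k, f ξ = ∫⁻ ξ, f ξ := by
  rw [← lintegral_iUnion (measurableSet_dyadicCube j) (pairwise_disjoint_dyadicCube j),
    iUnion_dyadicCube, Measure.restrict_univ]

lemma ENNReal.lintegral_rpow_le_lintegral_rpow_mul_measure_univ {α : Type*} [MeasurableSpace α]
    {μ : Measure α} {f : α → ℝ≥0∞} (hf : AEMeasurable f μ) {p q : ℝ} (hp : 0 ≤ p) (hpq : p ≤ q) :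
    ∫⁻ x, f x ^ p ∂μ ≤ (∫⁻ x, f x ^ q ∂μ) ^ (p / q) * μ Set.univ ^ (1 - p / q) := by
  rcases hp.eq_or_lt with rfl | hp
  · simp
  have hq : 0 < q := hp.trans_le hpq
  have := ENNReal.lintegral_mul_norm_pow_le (hf.pow_const q) (aemeasurable_const (b := 1))
    (div_nonneg hp.le hq.le) (sub_nonneg.2 ((div_le_one hq).2 hpq)) (add_sub_cancel _ _)
  simpa [← ENNReal.rpow_mul, mul_div_cancel₀ p hq.ne'] using this

lemma Real.rpow_three_halves_le {p s u B : ℝ} (hp : 0 < p) (hp3 : p ≤ 3) (hu : 0 < u)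
    (hB : 0 ≤ B) (hBu : B ≤ u ^ (s / 2)) :
    (u ^ (-s / p) * B ^ (2 / p)) ^ (3 / 2 : ℝ) ≤ u ^ (-s / 2) * B := by
  set y := u ^ (-s / 2) * B
  have hy0 : 0 ≤ y := by positivity
  have hy1 : y ≤ 1 := by
    calc y ≤ u ^ (-s / 2) * u ^ (s / 2) := mul_le_mul_of_nonneg_left hBu (by positivity)
      _ = 1 := by rw [← Real.rpow_add hu, neg_div, neg_add_cancel, Real.rpow_zero]
  have hy : u ^ (-s / p) * B ^ (2 / p) = y ^ (2 / p) := by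
    rw [Real.mul_rpow (by positivity) hB, ← Real.rpow_mul hu.le]
    congr 2
    field_simp
  rw [hy, ← Real.rpow_mul hy0]
  calc y ^ (2 / p * (3 / 2)) ≤ y ^ (1 : ℝ) :=
        Real.rpow_le_rpow_of_exponent_ge' hy0 hy1 zero_le_one (by
          rw [div_mul_div_comm, le_div_iff₀ (by positivity)]; linarith)
    _ = y := Real.rpow_one y

lemma two_zpow_rpow (m : ℤ) (s : ℝ) : ((2 : ℝ) ^ m) ^ s = 2 ^ (m * s) := by
  rw [← Real.rpow_intCast, ← Real.rpow_mul zero_le_two]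

lemma four_zpow_rpow_neg_half (j : ℤ) (s : ℝ) :
    ((4 : ℝ) ^ j) ^ (-s / 2) = ((2 : ℝ) ^ (-j)) ^ s := by
  rw [show (4 : ℝ) ^ j = 2 ^ (2 * j) by rw [zpow_mul]; norm_num, two_zpow_rpow, two_zpow_rpow]
  push_cast
  ring_nf

lemma tsum_ite_two_zpow_rpow_le {s : ℝ} (hs : 0 < s) (t : ℝ) :
    ∑' j : ℤ, (if (2 : ℝ) ^ (-j) ≤ t then ENNReal.ofReal (((2 : ℝ) ^ (-j)) ^ s) else 0)
      ≤ ENNReal.ofReal (1 - 2 ^ (-s))⁻¹ * ENNReal.ofReal t ^ s := by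
  rcases le_or_gt t 0 with ht | ht
  · have hj (j : ℤ) : ¬ (2 : ℝ) ^ (-j) ≤ t := fun h => (zpow_pos two_pos (-j)).not_ge (h.trans ht)
    simp only [hj, if_false, tsum_zero, zero_le]
  set j₀ := -Int.log 2 t
  have hj₀ (j : ℤ) : (2 : ℝ) ^ (-j) ≤ t ↔ j₀ ≤ j := by
    rw [← Nat.cast_ofNat, Int.zpow_le_iff_le_log one_lt_two ht]
    omega
  set r : ℝ := 2 ^ (-s)
  have hr : r < 1 := Real.rpow_lt_one_of_one_lt_of_neg one_lt_two (neg_neg_of_pos hs)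
  have hshift (n : ℕ) : ENNReal.ofReal (((2 : ℝ) ^ (-(j₀ + n))) ^ s)
      = ENNReal.ofReal (((2 : ℝ) ^ (-j₀)) ^ s) * ENNReal.ofReal r ^ n := by
    rw [← ENNReal.ofReal_pow (by positivity), ← ENNReal.ofReal_mul (by positivity),
      two_zpow_rpow, two_zpow_rpow, ← Real.rpow_mul_natCast zero_le_two, ← Real.rpow_add two_pos]
    push_cast
    ring_nf
  calc ∑' j : ℤ, (if (2 : ℝ) ^ (-j) ≤ t then ENNReal.ofReal (((2 : ℝ) ^ (-j)) ^ s) else 0)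
      = ∑' n : ℕ, ENNReal.ofReal (((2 : ℝ) ^ (-(j₀ + n))) ^ s) := by
        rw [← Function.Injective.tsum_eq (add_right_injective j₀ |>.comp Nat.cast_injective)]
        · exact tsum_congr fun n => if_pos ((hj₀ _).2 (by simp))
        · intro j hj
          have := (hj₀ j).1 (by by_contra h; exact hj (if_neg h))
          exact ⟨(j - j₀).toNat, by simp only [Function.comp_apply, Int.ofNat_toNat]; omega⟩
    _ = ENNReal.ofReal (((2 : ℝ) ^ (-j₀)) ^ s) * ENNReal.ofReal (1 - r)⁻¹ := by
        rw [tsum_congr hshift, ENNReal.tsum_mul_left, ENNReal.tsum_geometric,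
          ENNReal.ofReal_inv_of_pos (sub_pos.2 hr), ENNReal.ofReal_sub _ (by positivity),
          ENNReal.ofReal_one]
    _ ≤ ENNReal.ofReal (1 - r)⁻¹ * ENNReal.ofReal t ^ s := by
        rw [mul_comm, ENNReal.ofReal_rpow_of_pos ht]
        gcongr
        rw [neg_neg, ← Nat.cast_ofNat]
        exact Int.zpow_log_le_self one_lt_two ht

def largePart {α : Type*} (F : α → ℝ) (j : ℤ) (ξ : α) : ℝ :=
  if (2 : ℝ) ^ (-j) ≤ F ξ then F ξ else 0

section LargePart

variable {α : Type*} {F : α → ℝ}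

lemma Measurable.largePart [MeasurableSpace α] (hF : Measurable F) (j : ℤ) :
    Measurable (largePart F j) :=
  Measurable.ite (measurableSet_le measurable_const hF) hF measurable_const

lemma largePart_nonneg (hF0 : ∀ ξ, 0 ≤ F ξ) (j : ℤ) (ξ : α) : 0 ≤ largePart F j ξ := by
  unfold largePart
  split_ifs
  exacts [hF0 ξ, le_rfl]

lemma largePart_le (hF0 : ∀ ξ, 0 ≤ F ξ) (j : ℤ) (ξ : α) : largePart F j ξ ≤ F ξ := by
  unfold largePart
  split_ifs
  exacts [le_rfl, hF0 ξ]

end LargePart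

lemma tsum_weight_mul_largePart_rpow_le {p : ℝ} (hp0 : 0 < p) (hp2 : p < 2) (t : ℝ) :
    ∑' j : ℤ, ENNReal.ofReal (((4 : ℝ) ^ j) ^ (-(2 - p) / 2)) *
        ENNReal.ofReal (if (2 : ℝ) ^ (-j) ≤ t then t else 0) ^ p
      ≤ ENNReal.ofReal (1 - 2 ^ (-(2 - p)))⁻¹ * ENNReal.ofReal t ^ (2 : ℝ) := by
  have hterm (j : ℤ) : ENNReal.ofReal (((4 : ℝ) ^ j) ^ (-(2 - p) / 2)) *
        ENNReal.ofReal (if (2 : ℝ) ^ (-j) ≤ t then t else 0) ^ p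
      = (if (2 : ℝ) ^ (-j) ≤ t then ENNReal.ofReal (((2 : ℝ) ^ (-j)) ^ (2 - p)) else 0) *
        ENNReal.ofReal t ^ p := by
    rw [four_zpow_rpow_neg_half]
    split_ifs
    · rfl
    · simp [ENNReal.zero_rpow_of_pos hp0]
  calc _ = (∑' j : ℤ, if (2 : ℝ) ^ (-j) ≤ t then ENNReal.ofReal (((2 : ℝ) ^ (-j)) ^ (2 - p))
          else 0) * ENNReal.ofReal t ^ p := by
        rw [tsum_congr hterm, ENNReal.tsum_mul_right]
    _ ≤ ENNReal.ofReal (1 - 2 ^ (-(2 - p)))⁻¹ * ENNReal.ofReal t ^ (2 - p) *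
          ENNReal.ofReal t ^ p := by
        gcongr
        exact tsum_ite_two_zpow_rpow_le (by linarith) t
    _ = ENNReal.ofReal (1 - 2 ^ (-(2 - p)))⁻¹ * ENNReal.ofReal t ^ (2 : ℝ) := by
        rw [mul_assoc, ← ENNReal.rpow_add_of_nonneg _ _ (by linarith) hp0.le, sub_add_cancel]

lemma tsum_weight_mul_setLIntegral_largePart_le {p : ℝ} (hp0 : 0 < p) (hp2 : p < 2)
    {F : E2 → ℝ} (hF : Measurable F) :
    ∑' q : ℤ × (Fin 2 → ℤ), ENNReal.ofReal (((4 : ℝ) ^ q.1) ^ (-(2 - p) / 2)) *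
        ∫⁻ ξ in dyadicCube q.1 q.2, ENNReal.ofReal (largePart F q.1 ξ) ^ p
      ≤ ENNReal.ofReal (1 - 2 ^ (-(2 - p)))⁻¹ * ∫⁻ ξ, ENNReal.ofReal (F ξ) ^ (2 : ℝ) := by
  have hmeas (j : ℤ) : Measurable fun ξ => ENNReal.ofReal (largePart F j ξ) ^ p :=
    (hF.largePart j).ennreal_ofReal.pow_const p
  calc _ = ∑' j : ℤ, ∑' k, ENNReal.ofReal (((4 : ℝ) ^ j) ^ (-(2 - p) / 2)) *
          ∫⁻ ξ in dyadicCube j k, ENNReal.ofReal (largePart F j ξ) ^ p :=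
        ENNReal.tsum_prod
    _ = ∫⁻ ξ, ∑' j : ℤ, ENNReal.ofReal (((4 : ℝ) ^ j) ^ (-(2 - p) / 2)) *
          ENNReal.ofReal (largePart F j ξ) ^ p := by
        rw [lintegral_tsum fun j => ((hmeas j).const_mul _).aemeasurable]
        refine tsum_congr fun j => ?_
        rw [ENNReal.tsum_mul_left, tsum_setLIntegral_dyadicCube, lintegral_const_mul _ (hmeas j)]
    _ ≤ ∫⁻ ξ, ENNReal.ofReal (1 - 2 ^ (-(2 - p)))⁻¹ * ENNReal.ofReal (F ξ) ^ (2 : ℝ) :=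
        lintegral_mono fun ξ => tsum_weight_mul_largePart_rpow_le hp0 hp2 (F ξ)
    _ = _ := lintegral_const_mul _ (hF.ennreal_ofReal.pow_const _)

lemma rpow_three_halves_setIntegral_le {α : Type*} [MeasurableSpace α] {μ : Measure α}
    {Q : Set α} {p u : ℝ} (hp : 0 < p) (hp2 : p ≤ 2) (hu : 0 < u) (hQ : μ Q = ENNReal.ofReal u)
    {g : α → ℝ} (hg : Measurable g) (hg0 : ∀ x, 0 ≤ g x)
    (hg2 : ∫⁻ x in Q, ENNReal.ofReal (g x) ^ (2 : ℝ) ∂μ ≤ 1) :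
    (u ^ (-(2 - p) / p) * (∫ x in Q, g x ^ p ∂μ) ^ (2 / p)) ^ (3 / 2 : ℝ)
      ≤ (ENNReal.ofReal (u ^ (-(2 - p) / 2)) * ∫⁻ x in Q, ENNReal.ofReal (g x) ^ p ∂μ).toReal := by
  set I := ∫⁻ x in Q, ENNReal.ofReal (g x) ^ p ∂μ
  have hI : ∫ x in Q, g x ^ p ∂μ = I.toReal := by
    rw [integral_eq_lintegral_of_nonneg_ae (ae_of_all _ fun x => Real.rpow_nonneg (hg0 x) p)
      (hg.pow_const p).aestronglyMeasurable]
    congr 1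
    exact lintegral_congr fun x => (ENNReal.ofReal_rpow_of_nonneg (hg0 x) hp.le).symm
  have hIu : I ≤ ENNReal.ofReal (u ^ ((2 - p) / 2)) :=
    calc I ≤ (∫⁻ x in Q, ENNReal.ofReal (g x) ^ (2 : ℝ) ∂μ) ^ (p / 2) *
          μ.restrict Q Set.univ ^ (1 - p / 2) :=
          ENNReal.lintegral_rpow_le_lintegral_rpow_mul_measure_univ
            hg.ennreal_ofReal.aemeasurable hp.le hp2
      _ ≤ 1 * μ Q ^ (1 - p / 2) := by
          rw [Measure.restrict_apply_univ]
          gcongr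
          exact ENNReal.rpow_le_one hg2 (by positivity)
      _ = ENNReal.ofReal (u ^ ((2 - p) / 2)) := by
          rw [one_mul, hQ, ENNReal.ofReal_rpow_of_pos hu]
          ring_nf
  rw [ENNReal.toReal_mul, ENNReal.toReal_ofReal (by positivity), hI]
  exact Real.rpow_three_halves_le hp (by linarith) hu ENNReal.toReal_nonneg
    (ENNReal.toReal_le_of_le_ofReal (by positivity) hIu)

lemma tsum_le_of_le_toReal {ι : Type*} {f : ι → ℝ} {g : ι → ℝ≥0∞} {c : ℝ}
    (hf0 : ∀ i, 0 ≤ f i) (hfg : ∀ i, f i ≤ (g i).toReal) (hc : 0 ≤ c)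
    (hg : ∑' i, g i ≤ ENNReal.ofReal c) : ∑' i, f i ≤ c := by
  have hg_ne_top : ∑' i, g i ≠ ∞ := ne_top_of_le_ne_top ENNReal.ofReal_ne_top hg
  have hsum := ENNReal.summable_toReal hg_ne_top
  calc ∑' i, f i ≤ ∑' i, (g i).toReal :=
        (hsum.of_nonneg_of_le hf0 hfg).tsum_le_tsum hfg hsum
    _ = (∑' i, g i).toReal :=
        (ENNReal.tsum_toReal_eq (ENNReal.ne_top_of_tsum_ne_top hg_ne_top)).symm
    _ ≤ c := ENNReal.toReal_le_of_le_ofReal hc hg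

lemma lintegral_ofReal_rpow_two_le_one {α : Type*} [MeasurableSpace α] {μ : Measure α}
    {F : α → ℝ} (hF0 : ∀ x, 0 ≤ F x) (hF : eLpNorm F 2 μ ≤ 1) :
    ∫⁻ x, ENNReal.ofReal (F x) ^ (2 : ℝ) ∂μ ≤ 1 := by
  have h := eLpNorm_nnreal_pow_eq_lintegral (f := F) (μ := μ) (p := 2) two_ne_zero
  simp only [NNReal.coe_ofNat, ENNReal.coe_ofNat, Real.enorm_eq_ofReal (hF0 _)] at h
  exact h ▸ ENNReal.rpow_le_one hF zero_le_two

/-- Discrete `ℓ²` summation estimate over dyadic cubes (large part): for `1 < p < 2` and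
`F ≥ 0` with `‖F‖_{L²(ℝ²)} ≤ 1`,
`∑_j ∑_{Q ∈ 𝒟_j} (|Q|^{-(2-p)/p} ‖F·χ_{F ≥ 2^{-j}}‖_{L^p(Q)}²)^{3/2} ≲_p 1`. -/
theorem stmt5 (p : ℝ) (hp₁ : 1 < p) (hp₂ : p < 2) :
    ∃ C > 0, ∀ F : E2 → ℝ, Measurable F → (∀ ξ, 0 ≤ F ξ) →
      eLpNorm F 2 volume ≤ 1 →
      (∑' q : ℤ × (Fin 2 → ℤ),
        (((4 : ℝ) ^ q.1) ^ (-(2 - p) / p) *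
          (∫ ξ in dyadicCube q.1 q.2,
            (if (2 : ℝ) ^ (-q.1) ≤ F ξ then F ξ else 0) ^ p) ^ (2 / p)) ^ (3 / 2 : ℝ))
        ≤ C := by
  have hp0 : 0 < p := by linarith
  have hC : 0 < (1 - (2 : ℝ) ^ (-(2 - p)))⁻¹ :=
    inv_pos.2 (sub_pos.2 (Real.rpow_lt_one_of_one_lt_of_neg one_lt_two (by linarith)))
  refine ⟨_, hC, fun F hF hF0 hFL2 => ?_⟩
  have hL2 := lintegral_ofReal_rpow_two_le_one hF0 hFL2
  have hintegral_nonneg (q : ℤ × (Fin 2 → ℤ)) :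
      0 ≤ ∫ ξ in dyadicCube q.1 q.2, largePart F q.1 ξ ^ p :=
    integral_nonneg fun ξ => Real.rpow_nonneg (largePart_nonneg hF0 q.1 ξ) p
  refine tsum_le_of_le_toReal (fun q => by have := hintegral_nonneg q; positivity) (fun q => ?_)
    hC.le
    ((tsum_weight_mul_setLIntegral_largePart_le hp0 hp₂ hF).trans (mul_le_of_le_one_right' hL2))
  refine rpow_three_halves_setIntegral_le hp0 hp₂.le (zpow_pos four_pos _) (volume_dyadicCube _ _)
    (hF.largePart q.1) (largePart_nonneg hF0 q.1) ((setLIntegral_le_lintegral _ _).trans ?_)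
  exact (lintegral_mono fun ξ => by gcongr; exact largePart_le hF0 q.1 ξ).trans hL2
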